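/- Let y : [0, ∞) → (0, ∞) be a positive absolutely continuous function and let l > 1, θ > 0, η ≥ 0 be real numbers such that y′(t) + θ y(t)^l ≤ η for almost every t ≥ 0. Then for every t > 0 one has y(t) ≤ (η/θ)^{1/l} + (θ (l−1) t)^{−1/(l−1)}. -/

import Mathlib

open MeasureTheory Set Filter
open scoped Topology

/-!
With `K = (η/θ)^{1/l}` and `ψ(t) = (θ(l-1)t)^{-1/(l-1)}` the solution of `ψ' = -θ ψ^l` that blows
up at `0`, the function `K + ψ` is a supersolution: since `θ K^l = η` and
`(K + ψ)^l ≥ K^l + ψ^l`, wherever `y ≥ K + ψ` we get `y' ≤ η - θ y^l ≤ -θ ψ^l = (K + ψ)'`.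
As `ψ → ∞` at `0` while `y` is bounded on `[0, t]`, `y ≤ K + ψ` at some `s₀ ∈ (0, t]`, and from the
last time in `[s₀, t]` at which `y ≤ K + ψ`, integrating `y' ≤ (K + ψ)'` up to `t` keeps `y` below.
-/

section Comparison

variable {y g φ φ' : ℝ → ℝ} {x₀ s₀ t : ℝ}

lemma exists_mem_Ioc_le_of_tendsto_atTop {f h : ℝ → ℝ} {a b : ℝ} (hab : a < b)
    (hf : BddAbove (f '' Icc a b)) (hh : Tendsto h (𝓝[>] a) atTop) :
    ∃ s ∈ Ioc a b, f s ≤ h s := by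
  obtain ⟨M, hM⟩ := hf
  obtain ⟨s, hMs, hs⟩ := ((hh.eventually_ge_atTop M).and (Ioc_mem_nhdsGT hab)).exists
  exact ⟨s, hs, (hM (mem_image_of_mem f (Ioc_subset_Icc_self hs))).trans hMs⟩

lemma exists_le_forall_Ioc_lt_of_continuousOn {f h : ℝ → ℝ} {a b : ℝ} (hab : a ≤ b)
    (hf : ContinuousOn f (Icc a b)) (hh : ContinuousOn h (Icc a b)) (ha : f a ≤ h a) :
    ∃ c ∈ Icc a b, f c ≤ h c ∧ ∀ s ∈ Ioc c b, h s < f s := by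
  set S := {s ∈ Icc a b | f s ≤ h s}
  have hS : IsCompact S :=
    isCompact_Icc.of_isClosed_subset (isClosed_Icc.isClosed_le hf hh) fun _ hs => hs.1
  have hc : sSup S ∈ S := hS.sSup_mem ⟨a, left_mem_Icc.2 hab, ha⟩
  refine ⟨sSup S, hc.1, hc.2, fun s hs => not_le.1 fun hle => ?_⟩
  exact hs.1.not_ge (le_csSup hS.bddAbove ⟨⟨hc.1.1.trans hs.1.le, hs.2⟩, hle⟩)

lemma continuousOn_of_eq_add_integral (hx₀ : x₀ ≤ s₀) (hg : IntervalIntegrable g volume x₀ t)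
    (hy : ∀ s ∈ Icc s₀ t, y s = y x₀ + ∫ u in x₀..s, g u) : ContinuousOn y (Icc s₀ t) := by
  have hsub : Icc s₀ t ⊆ uIcc x₀ t := (Icc_subset_Icc_left hx₀).trans Icc_subset_uIcc
  exact (continuousOn_const.add
    ((intervalIntegral.continuousOn_primitive_interval' hg left_mem_uIcc).mono hsub)).congr hy

theorem le_of_eq_add_integral_of_ae_le_deriv (hx₀ : x₀ ≤ s₀) (hst : s₀ ≤ t)
    (hg : IntervalIntegrable g volume x₀ t)
    (hy : ∀ s ∈ Icc s₀ t, y s = y x₀ + ∫ u in x₀..s, g u)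
    (hφ : ∀ s ∈ Icc s₀ t, HasDerivAt φ (φ' s) s) (hφ' : IntervalIntegrable φ' volume s₀ t)
    (hle : ∀ᵐ s, s ∈ Icc s₀ t → φ s ≤ y s → g s ≤ φ' s) (h₀ : y s₀ ≤ φ s₀) : y t ≤ φ t := by
  obtain ⟨a, ha, hya, hlt⟩ := exists_le_forall_Ioc_lt_of_continuousOn hst
    (continuousOn_of_eq_add_integral hx₀ hg hy)
    (fun s hs => (hφ s hs).continuousAt.continuousWithinAt) h₀
  have hx₀a : uIcc x₀ a ⊆ uIcc x₀ t := uIcc_subset_uIcc left_mem_uIcc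
    (Icc_subset_uIcc ⟨hx₀.trans ha.1, ha.2⟩)
  have hga : IntervalIntegrable g volume a t :=
    hg.mono_set (uIcc_subset_uIcc (Icc_subset_uIcc ⟨hx₀.trans ha.1, ha.2⟩) right_mem_uIcc)
  have hφa : IntervalIntegrable φ' volume a t :=
    hφ'.mono_set (uIcc_subset_uIcc (Icc_subset_uIcc ha) right_mem_uIcc)
  have hy_diff : y t - y a = ∫ u in a..t, g u := by
    rw [hy t ⟨hst, le_rfl⟩, hy a ha,
      ← intervalIntegral.integral_interval_sub_left hg (hg.mono_set hx₀a)]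
    ring
  have hφ_diff : φ t - φ a = ∫ u in a..t, φ' u := by
    refine (intervalIntegral.integral_eq_sub_of_hasDerivAt (fun s hs => hφ s ?_) hφa).symm
    rw [uIcc_of_le ha.2] at hs
    exact ⟨ha.1.trans hs.1, hs.2⟩
  have hmono : ∫ u in a..t, g u ≤ ∫ u in a..t, φ' u := by
    rw [intervalIntegral.integral_of_le ha.2, intervalIntegral.integral_of_le ha.2]
    refine setIntegral_mono_ae_restrict hga.1 hφa.1 ?_
    filter_upwards [ae_restrict_of_ae hle, ae_restrict_mem measurableSet_Ioc] with s hs hsI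
    exact hs ⟨ha.1.trans hsI.1.le, hsI.2⟩ (hlt s hsI).le
  linarith

end Comparison

section BlowupSolution

variable {θ l t : ℝ}

/-- The solution of `ψ' = -θ ψ ^ l` with `ψ (0+) = ∞`. -/
noncomputable def blowupSolution (θ l t : ℝ) : ℝ := (θ * (l - 1) * t) ^ (-(1 / (l - 1)))

lemma blowupSolution_pos (hθ : 0 < θ) (hl : 1 < l) (ht : 0 < t) : 0 < blowupSolution θ l t := by
  have : 0 < l - 1 := sub_pos.2 hl
  unfold blowupSolution
  positivity

lemma hasDerivAt_blowupSolution (hθ : 0 < θ) (hl : 1 < l) (ht : 0 < t) :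
    HasDerivAt (blowupSolution θ l) (-(θ * blowupSolution θ l t ^ l)) t := by
  have hl1 : 0 < l - 1 := sub_pos.2 hl
  have hct : 0 < θ * (l - 1) * t := by positivity
  refine (((hasDerivAt_id' t).const_mul (θ * (l - 1))).rpow_const
    (p := -(1 / (l - 1))) (Or.inl hct.ne')).congr_deriv ?_
  unfold blowupSolution
  rw [← Real.rpow_mul hct.le, mul_one,
    show -(1 / (l - 1)) - 1 = -(1 / (l - 1)) * l by field_simp; ring]
  field_simp

lemma tendsto_blowupSolution_nhdsGT_zero (hθ : 0 < θ) (hl : 1 < l) :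
    Tendsto (blowupSolution θ l) (𝓝[>] 0) atTop := by
  have hc : 0 < θ * (l - 1) := mul_pos hθ (sub_pos.2 hl)
  exact (tendsto_rpow_neg_nhdsGT_zero (neg_lt_zero.2 (one_div_pos.2 (sub_pos.2 hl)))).comp
    (tendsto_iff_comap.2 (comap_mulLeft_nhdsGT_zero hc).ge)

end BlowupSolution

theorem stmt15_general (y g : ℝ → ℝ) (l θ η : ℝ)
    (hl : 1 < l) (hθ : 0 < θ) (hη : 0 ≤ η)
    -- `y` is absolutely continuous on `[0, ∞)`:
    (hInt : ∀ t, 0 ≤ t → IntervalIntegrable g volume 0 t)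
    (hAC : ∀ t, 0 ≤ t → y t = y 0 + ∫ s in (0 : ℝ)..t, g s)
    -- `y′ + θ yˡ ≤ η` almost everywhere on `[0, ∞)`:
    (hineq : ∀ᵐ t ∂volume, 0 ≤ t → g t + θ * y t ^ l ≤ η) :
    ∀ t, 0 < t → y t ≤ (η / θ) ^ (1 / l) + (θ * (l - 1) * t) ^ (-(1 / (l - 1))) := by
  intro t ht
  set K := (η / θ) ^ (1 / l)
  have hK : 0 ≤ K := by positivity
  have hKl : θ * K ^ l = η := by
    rw [← Real.rpow_mul (by positivity), one_div_mul_cancel (by linarith), Real.rpow_one]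
    field_simp
  obtain ⟨s₀, hs₀, hys₀⟩ := exists_mem_Ioc_le_of_tendsto_atTop ht
    (isCompact_Icc.bddAbove_image
      (continuousOn_of_eq_add_integral le_rfl (hInt t ht.le) fun s hs => hAC s hs.1))
    (tendsto_atTop_add_const_left _ K (tendsto_blowupSolution_nhdsGT_zero hθ hl))
  have hψ : ∀ s ∈ Icc s₀ t, HasDerivAt (fun s => K + blowupSolution θ l s)
      (-(θ * blowupSolution θ l s ^ l)) s := fun s hs =>
    (hasDerivAt_blowupSolution hθ hl (hs₀.1.trans_le hs.1)).const_add K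
  refine le_of_eq_add_integral_of_ae_le_deriv hs₀.1.le hs₀.2 (hInt t ht.le)
    (fun s hs => hAC s (hs₀.1.le.trans hs.1)) hψ ?_ ?_ hys₀
  · have hψc : ContinuousOn (blowupSolution θ l) (uIcc s₀ t) := fun s hs =>
      (hasDerivAt_blowupSolution hθ hl
        (hs₀.1.trans_le (uIcc_of_le hs₀.2 ▸ hs).1)).continuousAt.continuousWithinAt
    exact ((hψc.rpow_const fun _ _ => Or.inr (by linarith)).const_smul θ).neg.intervalIntegrable
  · filter_upwards [hineq] with s hs hsI hle
    have hψs := blowupSolution_pos hθ hl (hs₀.1.trans_le hsI.1)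
    have hsuper : K ^ l + blowupSolution θ l s ^ l ≤ y s ^ l :=
      (Real.add_rpow_le_rpow_add hK hψs.le hl.le).trans
        (Real.rpow_le_rpow (by positivity) hle (by linarith))
    have := mul_le_mul_of_nonneg_left hsuper hθ.le
    linarith [hs (hs₀.1.le.trans hsI.1)]

theorem stmt15 (y g : ℝ → ℝ) (l θ η : ℝ)
    (hl : 1 < l) (hθ : 0 < θ) (hη : 0 ≤ η)
    (hpos : ∀ t, 0 ≤ t → 0 < y t)
    -- `y` is absolutely continuous on `[0, ∞)`:
    (hInt : ∀ t, 0 ≤ t → IntervalIntegrable g volume 0 t)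
    (hAC : ∀ t, 0 ≤ t → y t = y 0 + ∫ s in (0 : ℝ)..t, g s)
    -- `y′ + θ yˡ ≤ η` almost everywhere on `[0, ∞)`:
    (hineq : ∀ᵐ t ∂volume, 0 ≤ t → g t + θ * y t ^ l ≤ η) :
    ∀ t, 0 < t → y t ≤ (η / θ) ^ (1 / l) + (θ * (l - 1) * t) ^ (-(1 / (l - 1))) :=
  stmt15_general y g l θ η hl hθ hη hInt hAC hineq
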